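/- For every integer k ≥ 1, the Laurent polynomial x^{k+1} r_k(x) + x^{k+1} s_k(x) · (Σ_{l=1}^{2k+1} (−1)^{l−1}(l−1)! x^{−l}) is congruent to the constant k! modulo x^{−1}ℚ[x^{−1}]; that is, its coefficient of x^{j} vanishes for every j ≥ 1 and its constant coefficient equals k!. -/

import Mathlib

/-!
Here `s_k(x) = ∑ᵢ C(k,i) xⁱ / i!` is `L_k(-x)` for the Laguerre polynomial `L_k`, and
`F(x) = ∑_{j ≥ 0} (-1)ʲ j! x^{-(j+1)}` is the asymptotic expansion of `eˣ E₁(x)`.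
Both `r` and `s` satisfy the Laguerre recurrence, and `r_k` is minus the polynomial part of
`s_k F`: multiplying by `x` moves the `x⁻¹`-coefficient of `s_{k-1} F` into degree `0`, but
that coefficient is `∑ⱼ (-1)ʲ C(k-1, j) = 0`. So `r_k + s_k F` has only negative powers, and
its coefficient of `x^{-(n+1)}` is `∑ᵢ (-1)^{n+i} C(k,i) (i+1)⋯(i+n)`, a `k`-th finite
difference of a monic polynomial of degree `n`: it vanishes for `n < k` and equals `k!` for
`n = k`.
Truncating `F` after `2k+1` terms does not affect any of these coefficients.
-/

open Polynomial Finset LaurentPolynomial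

theorem sum_range_alternating_choose_mul_ascPochhammer_eval {R : Type*} [CommRing R]
    [IsDomain R] {n k : ℕ} (hn : n ≤ k) :
    ∑ i ∈ range (k + 1), (-1 : R) ^ (k - i) * k.choose i * (ascPochhammer R n).eval ((i : R) + 1)
      = if n = k then (k.factorial : R) else 0 := by
  have hdiff := fwdDiff_iter_eq_sum_shift (1 : R) (ascPochhammer R n).eval k 1
  simp only [zsmul_eq_mul, nsmul_one, Int.cast_mul, Int.cast_pow, Int.cast_neg, Int.cast_one,
    Int.cast_natCast, add_comm (1 : R)] at hdiff
  rw [← hdiff]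
  split_ifs with h
  · subst h
    have := (ascPochhammer R n).fwdDiff_iter_degree_eq_factorial
    rw [ascPochhammer_natDegree, (monic_ascPochhammer R n).leadingCoeff, one_smul] at this
    rw [this]
    rfl
  · rw [Polynomial.fwdDiff_iter_eq_zero_of_degree_lt (by rw [ascPochhammer_natDegree]; omega)]
    rfl

theorem cast_choose_laguerre_recurrence (m j : ℕ) :
    ((m : ℚ) + 2) * (m + 2).choose (j + 1)
      = (2 * m + 3) * (m + 1).choose (j + 1) + (j + 1) * (m + 1).choose j
        - (m + 1) * m.choose (j + 1) := by
  have pascal₁ := Nat.choose_succ_succ' (m + 1) j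
  have pascal₂ := Nat.choose_succ_succ' m j
  have absorb₁ := Nat.add_one_mul_choose_eq (m + 1) j
  have absorb₂ := Nat.add_one_mul_choose_eq m j
  qify at pascal₁ pascal₂ absorb₁ absorb₂
  linear_combination ((m : ℚ) + j + 3) * pascal₁ - ((m : ℚ) + 1) * pascal₂ + absorb₁ - absorb₂

namespace LaurentPolynomial

variable {R : Type*} [Semiring R]

theorem coeff_mul_T (f : R[T;T⁻¹]) (n m : ℤ) : (f * T n).coeff m = f.coeff (m - n) := by
  rw [T, AddMonoidAlgebra.coeff_mul_single_apply, mul_one, sub_eq_add_neg]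

theorem coeff_C_mul (a : R) (f : R[T;T⁻¹]) (m : ℤ) : (C a * f).coeff m = a * f.coeff m := by
  rw [← single_eq_C, AddMonoidAlgebra.coeff_single_mul_apply, neg_zero, zero_add]

theorem coeff_toLaurent_natCast (p : R[X]) (n : ℕ) : (toLaurent p).coeff n = p.coeff n := by
  rw [coeff_toLaurent]
  exact Finsupp.mapDomain_apply Nat.castEmbedding.injective _ n

theorem coeff_toLaurent_of_neg (p : R[X]) {m : ℤ} (hm : m < 0) : (toLaurent p).coeff m = 0 := by
  rw [coeff_toLaurent, Finsupp.mapDomain_of_notMem_range]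
  rintro ⟨n, rfl⟩
  exact (Int.natCast_nonneg n).not_gt hm

end LaurentPolynomial

def SatisfiesLaguerreRec (p : ℕ → ℚ[X]) : Prop :=
  ∀ k : ℕ, 2 ≤ k →
    p k = Polynomial.C (1 / (k : ℚ)) * (Polynomial.C (2 * (k : ℚ) - 1) + X) * p (k - 1)
      - Polynomial.C (((k : ℚ) - 1) / (k : ℚ)) * p (k - 2)

theorem coeff_eq_of_satisfiesLaguerreRec {p : ℕ → ℚ[X]} (a : ℕ → ℕ → ℚ)
    (hp : SatisfiesLaguerreRec p)
    (h₀ : ∀ i, (p 0).coeff i = a 0 i) (h₁ : ∀ i, (p 1).coeff i = a 1 i)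
    (ha₀ : ∀ m : ℕ, ((m : ℚ) + 2) * a (m + 2) 0 = (2 * m + 3) * a (m + 1) 0 - (m + 1) * a m 0)
    (ha : ∀ m i : ℕ, ((m : ℚ) + 2) * a (m + 2) (i + 1)
      = (2 * m + 3) * a (m + 1) (i + 1) + a (m + 1) i - (m + 1) * a m (i + 1)) :
    ∀ k i, (p k).coeff i = a k i := by
  intro k
  induction k using Nat.twoStepInduction with
  | zero => exact h₀
  | one => exact h₁
  | more m ih₀ ih₁ =>
    have hm : (m : ℚ) + 2 ≠ 0 := by positivity
    intro i
    rw [hp (m + 2) le_add_self, Nat.add_sub_cancel, Nat.add_succ_sub_one]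
    simp only [Polynomial.coeff_sub, mul_assoc, Polynomial.coeff_C_mul, add_mul,
      Polynomial.coeff_add, Nat.cast_add, Nat.cast_ofNat]
    cases i with
    | zero =>
      simp only [coeff_X_mul_zero, ih₀, ih₁]
      field_simp
      linear_combination -ha₀ m
    | succ i =>
      simp only [coeff_X_mul, ih₀, ih₁]
      field_simp
      linear_combination -ha m i

def altFactorial (j : ℕ) : ℚ := (-1) ^ j * j.factorial

def sCoeff (k i : ℕ) : ℚ := k.choose i / i.factorial

theorem sCoeff_eq_zero_of_lt {k i : ℕ} (h : k < i) : sCoeff k i = 0 := by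
  simp [sCoeff, Nat.choose_eq_zero_of_lt h]

theorem sum_range_mul_sCoeff_of_le (f : ℕ → ℚ) {k d N N' : ℕ} (hN : k < d + N) (hN' : N ≤ N') :
    ∑ i ∈ range N', f i * sCoeff k (d + i) = ∑ i ∈ range N, f i * sCoeff k (d + i) := by
  refine (sum_subset (range_subset_range.mpr hN') fun i _ hi => ?_).symm
  rw [sCoeff_eq_zero_of_lt (by simp at hi; omega), mul_zero]

theorem sum_altFactorial_add_mul_sCoeff {n k : ℕ} (hn : n ≤ k) :
    ∑ i ∈ range (k + 1), altFactorial (n + i) * sCoeff k i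
      = if n = k then (k.factorial : ℚ) else 0 := by
  have hterm : ∀ i ∈ range (k + 1), altFactorial (n + i) * sCoeff k i
      = (-1) ^ (n + k)
          * ((-1) ^ (k - i) * k.choose i * (ascPochhammer ℚ n).eval ((i : ℚ) + 1)) := by
    intro i hi
    obtain ⟨t, rfl⟩ := Nat.exists_eq_add_of_le (Nat.lt_succ_iff.mp (mem_range.mp hi))
    have hsign : (-1 : ℚ) ^ (n + i) = (-1) ^ (n + (i + t)) * (-1) ^ (i + t - i) := by
      rw [Nat.add_sub_cancel_left, ← pow_add, (by ring : n + (i + t) + t = n + i + 2 * t),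
        pow_add _ (n + i), pow_mul, neg_one_sq, one_pow, mul_one]
    rw [altFactorial, sCoeff, hsign, add_comm n i, ← factorial_mul_ascPochhammer ℚ i n]
    field_simp
  rw [sum_congr rfl hterm, ← mul_sum, sum_range_alternating_choose_mul_ascPochhammer_eval hn]
  split_ifs with h
  · rw [h, ← two_mul, pow_mul, neg_one_sq, one_pow, one_mul]
  · rw [mul_zero]

theorem sCoeff_laguerre_recurrence (m j : ℕ) :
    ((m : ℚ) + 2) * sCoeff (m + 2) (j + 1)
      = (2 * m + 3) * sCoeff (m + 1) (j + 1) + sCoeff (m + 1) j - (m + 1) * sCoeff m (j + 1) := by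
  simp only [sCoeff, Nat.factorial_succ, Nat.cast_mul, Nat.cast_succ]
  field_simp
  linear_combination cast_choose_laguerre_recurrence m j

theorem coeff_eq_sCoeff {s : ℕ → ℚ[X]} (hs : SatisfiesLaguerreRec s) (hs0 : s 0 = 1)
    (hs1 : s 1 = 1 + X) :
    ∀ k i, (s k).coeff i = sCoeff k i := by
  refine coeff_eq_of_satisfiesLaguerreRec sCoeff hs (fun i => ?_) (fun i => ?_) (fun m => ?_)
    sCoeff_laguerre_recurrence
  · rcases i with _ | i <;> simp [hs0, sCoeff, coeff_one]
  · rcases i with _ | _ | i <;> simp [hs1, sCoeff, coeff_one, coeff_X, Nat.choose_eq_zero_of_lt]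
  · simp only [sCoeff, Nat.choose_zero_right]; ring

def rCoeff (k i : ℕ) : ℚ := -∑ j ∈ range k, altFactorial j * sCoeff k (i + 1 + j)

theorem rCoeff_eq_sum_range {k N : ℕ} (hN : k ≤ N) (i : ℕ) :
    rCoeff k i = -∑ j ∈ range N, altFactorial j * sCoeff k (i + 1 + j) := by
  rw [rCoeff, sum_range_mul_sCoeff_of_le _ (by omega) hN]

theorem rCoeff_laguerre_recurrence (m i : ℕ) :
    ((m : ℚ) + 2) * rCoeff (m + 2) i
      = (2 * m + 3) * rCoeff (m + 1) i
        - ∑ j ∈ range (m + 2), altFactorial j * sCoeff (m + 1) (i + j) - (m + 1) * rCoeff m i := by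
  rw [rCoeff, rCoeff_eq_sum_range (Nat.le_succ _), rCoeff_eq_sum_range (Nat.le_add_right m 2)]
  simp only [mul_neg, mul_sum, ← sum_sub_distrib, ← sum_neg_distrib]
  refine sum_congr rfl fun j _ => ?_
  rw [Nat.add_right_comm i 1 j]
  linear_combination -altFactorial j * sCoeff_laguerre_recurrence m (i + j)

theorem rCoeff_laguerre_recurrence_zero (m : ℕ) :
    ((m : ℚ) + 2) * rCoeff (m + 2) 0 = (2 * m + 3) * rCoeff (m + 1) 0 - (m + 1) * rCoeff m 0 := by
  have hvanish : ∑ j ∈ range (m + 2), altFactorial j * sCoeff (m + 1) j = 0 := by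
    simpa using sum_altFactorial_add_mul_sCoeff (n := 0) (k := m + 1) (Nat.zero_le _)
  rw [rCoeff_laguerre_recurrence]
  simp only [zero_add, hvanish]
  ring

theorem rCoeff_laguerre_recurrence_succ (m i : ℕ) :
    ((m : ℚ) + 2) * rCoeff (m + 2) (i + 1)
      = (2 * m + 3) * rCoeff (m + 1) (i + 1) + rCoeff (m + 1) i - (m + 1) * rCoeff m (i + 1) := by
  rw [rCoeff_laguerre_recurrence, rCoeff_eq_sum_range (Nat.le_succ (m + 1)) i]
  ring

theorem coeff_eq_rCoeff {r : ℕ → ℚ[X]} (hr : SatisfiesLaguerreRec r) (hr0 : r 0 = 0)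
    (hr1 : r 1 = -1) :
    ∀ k i, (r k).coeff i = rCoeff k i := by
  refine coeff_eq_of_satisfiesLaguerreRec rCoeff hr (fun i => ?_) (fun i => ?_)
    rCoeff_laguerre_recurrence_zero rCoeff_laguerre_recurrence_succ
  · simp [hr0, rCoeff]
  · rcases i with _ | i <;>
      simp [hr1, rCoeff, altFactorial, sCoeff, coeff_one, Nat.choose_eq_zero_of_lt]

noncomputable def altFactorialSeries (N : ℕ) : ℚ[T;T⁻¹] :=
  ∑ l ∈ Icc 1 N, LaurentPolynomial.C (altFactorial (l - 1)) * T (-(l : ℤ))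

theorem coeff_mul_altFactorialSeries (f : ℚ[T;T⁻¹]) (N : ℕ) (d : ℤ) :
    (f * altFactorialSeries N).coeff d
      = ∑ j ∈ range N, altFactorial j * f.coeff (d + 1 + j) := by
  rw [altFactorialSeries, mul_sum, AddMonoidAlgebra.coeff_sum, Finsupp.finsetSum_apply,
    ← Ico_add_one_right_eq_Icc, sum_Ico_eq_sum_range, Nat.add_sub_cancel]
  refine sum_congr rfl fun j _ => ?_
  rw [mul_left_comm, LaurentPolynomial.coeff_C_mul, LaurentPolynomial.coeff_mul_T,
    Nat.add_sub_cancel_left]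
  push_cast
  ring_nf

theorem coeff_natCast_add_mul_altFactorialSeries {k N : ℕ} {p q : ℚ[X]}
    (hp : ∀ i, p.coeff i = rCoeff k i) (hq : ∀ i, q.coeff i = sCoeff k i) (hN : k ≤ N) (n : ℕ) :
    (toLaurent p + toLaurent q * altFactorialSeries N).coeff n = 0 := by
  rw [AddMonoidAlgebra.coeff_add, Finsupp.add_apply, coeff_mul_altFactorialSeries,
    LaurentPolynomial.coeff_toLaurent_natCast, hp, rCoeff_eq_sum_range hN]
  simp only [← Nat.cast_add_one, ← Nat.cast_add, LaurentPolynomial.coeff_toLaurent_natCast, hq,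
    neg_add_cancel]

theorem coeff_neg_succ_add_mul_altFactorialSeries {k N n : ℕ} {p q : ℚ[X]}
    (hq : ∀ i, q.coeff i = sCoeff k i) (hn : n ≤ k) (hN : n + k < N) :
    (toLaurent p + toLaurent q * altFactorialSeries N).coeff (-(n + 1))
      = if n = k then (k.factorial : ℚ) else 0 := by
  rw [AddMonoidAlgebra.coeff_add, Finsupp.add_apply, coeff_mul_altFactorialSeries,
    LaurentPolynomial.coeff_toLaurent_of_neg _ (by omega), zero_add,
    ← Nat.add_sub_of_le (by omega : n ≤ N), sum_range_add, sum_eq_zero, zero_add]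
  · have hshift : ∀ i : ℕ, -((n : ℤ) + 1) + 1 + ((n + i : ℕ) : ℤ) = (i : ℕ) := by
      intro i; push_cast; ring
    simp only [hshift, LaurentPolynomial.coeff_toLaurent_natCast, hq]
    have htrunc := sum_range_mul_sCoeff_of_le (fun i => altFactorial (n + i)) (k := k) (d := 0)
      (N := k + 1) (N' := N - n) (by omega) (by omega)
    simp only [zero_add] at htrunc
    rw [htrunc, sum_altFactorial_add_mul_sCoeff hn]
  · intro j hj
    rw [LaurentPolynomial.coeff_toLaurent_of_neg _ (by simp at hj; omega), mul_zero]

/-- With `r, s` as in the paper, the Laurent polynomial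
`x^{k+1} rₖ(x) + x^{k+1} sₖ(x) ∑_{l=1}^{2k+1} (-1)^{l-1}(l-1)! x^{-l}`
is congruent to `k!` modulo `x⁻¹ℚ[x⁻¹]`: all its coefficients in degrees `≥ 1`
vanish and its constant coefficient equals `k!`. -/
theorem congruence_4_3
    (r s : ℕ → Polynomial ℚ)
    (hr0 : r 0 = 0) (hr1 : r 1 = -1) (hs0 : s 0 = 1) (hs1 : s 1 = 1 + X)
    (hr : ∀ k : ℕ, 2 ≤ k →
      r k = Polynomial.C (1 / (k : ℚ)) * (Polynomial.C (2 * (k : ℚ) - 1) + X) * r (k - 1)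
              - Polynomial.C (((k : ℚ) - 1) / (k : ℚ)) * r (k - 2))
    (hs : ∀ k : ℕ, 2 ≤ k →
      s k = Polynomial.C (1 / (k : ℚ)) * (Polynomial.C (2 * (k : ℚ) - 1) + X) * s (k - 1)
              - Polynomial.C (((k : ℚ) - 1) / (k : ℚ)) * s (k - 2)) :
    ∀ k : ℕ, 1 ≤ k →
      letI E : LaurentPolynomial ℚ :=
        toLaurent (r k) * T ((k : ℤ) + 1)
          + toLaurent (s k) * T ((k : ℤ) + 1)
            * ∑ l ∈ Finset.Icc 1 (2 * k + 1),
                LaurentPolynomial.C ((-1 : ℚ) ^ (l - 1) * ((l - 1).factorial : ℚ))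
                  * T (-(l : ℤ))
      (∀ j : ℤ, 1 ≤ j → E.coeff j = 0) ∧ E.coeff 0 = (k.factorial : ℚ) := by
  intro k _
  change (∀ j : ℤ, 1 ≤ j → (_ + _ * altFactorialSeries (2 * k + 1)).coeff j = 0)
    ∧ (_ + _ * altFactorialSeries (2 * k + 1)).coeff 0 = _
  rw [mul_right_comm (toLaurent (s k)), ← add_mul]
  simp only [LaurentPolynomial.coeff_mul_T]
  have hrk := coeff_eq_rCoeff hr hr0 hr1 k
  have hsk := coeff_eq_sCoeff hs hs0 hs1 k
  refine ⟨fun j hj => ?_, ?_⟩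
  · rcases le_or_gt ((k : ℤ) + 1) j with hjk | hjk
    · lift j - (k + 1) to ℕ using sub_nonneg.mpr hjk with n hn
      exact coeff_natCast_add_mul_altFactorialSeries hrk hsk (by omega) n
    · lift k - j to ℕ using (by omega) with n hn
      rw [(by omega : j - (k + 1) = -((n : ℤ) + 1)),
        coeff_neg_succ_add_mul_altFactorialSeries hsk (by omega) (by omega), if_neg (by omega)]
  · rw [zero_sub, coeff_neg_succ_add_mul_altFactorialSeries hsk le_rfl (by omega), if_pos rfl]
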